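/- arXiv:1509.08136 — 2 statements merged into one kernel-verified Lean document; each statement's English description precedes it below -/
import Mathlib

section
/- Let G be a finite group of odd order and let θ : G → PGL(n, ℝ) be an injective group homomorphism with n ≥ 2. Then there exists an injective group homomorphism θ' : G → SL(n, ℝ) lifting θ, i.e. the composition of θ' with the projection SL(n,ℝ) → PGL(n,ℝ) equals θ. -/
open Matrix

/-- The projective general linear group `PGL(n, R)`: the quotient of `GL(n, R)`
by its center (the scalar matrices). -/
abbrev PGL (n : ℕ) (R : Type*) [CommRing R] : Type _ :=
  GL (Fin n) R ⧸ Subgroup.center (GL (Fin n) R)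

/-- The natural projection `SL(n, R) → PGL(n, R)`, the composition of the inclusion
`SL(n,R) → GL(n,R)` with the quotient map by the center. -/
def SLtoPGL (n : ℕ) (R : Type*) [CommRing R] :
    Matrix.SpecialLinearGroup (Fin n) R →* PGL n R :=
  (QuotientGroup.mk' (Subgroup.center (GL (Fin n) R))).comp
    Matrix.SpecialLinearGroup.toGL

lemma aux_center_scalar {n : ℕ} (u : GL (Fin n) ℝ) (h : u ∈ Subgroup.center (GL (Fin n) ℝ)) :
    ∃ c : ℝ, (u : Matrix (Fin n) (Fin n) ℝ) = c • 1 := by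
  have hc : ∀ t : TransvectionStruct (Fin n) ℝ,
      Commute t.toMatrix (u : Matrix (Fin n) (Fin n) ℝ) := by
    intro t
    have h' := Subgroup.mem_center_iff.mp h ⟨t.toMatrix, t.inv.toMatrix, t.mul_inv, t.inv_mul⟩
    exact congrArg Units.val h'
  obtain ⟨c, hc⟩ := Matrix.mem_range_scalar_of_commute_transvectionStruct hc
  refine ⟨c, ?_⟩
  rw [← hc]
  simp [Matrix.scalar, Matrix.smul_one_eq_diagonal]

lemma aux_scalar_center {n : ℕ} (u : GL (Fin n) ℝ) (c : ℝ)
    (h : (u : Matrix (Fin n) (Fin n) ℝ) = c • 1) : u ∈ Subgroup.center (GL (Fin n) ℝ) := by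
  rw [Subgroup.mem_center_iff]
  intro g
  ext1
  show (g : Matrix (Fin n) (Fin n) ℝ) * u = (u : Matrix (Fin n) (Fin n) ℝ) * g
  rw [h, Matrix.mul_smul, Matrix.smul_mul, Matrix.mul_one, Matrix.one_mul]

lemma aux_pow_exists {n : ℕ} (hn : n ≠ 0) (d : ℝ) (hd0 : d ≠ 0) (hd : 0 < d ∨ Odd n) :
    ∃ l : ℝ, l ^ n = d := by
  have key : ∀ x : ℝ, 0 < x → ∃ l : ℝ, l ^ n = x := by
    intro x hx
    refine ⟨x ^ ((n : ℝ)⁻¹), ?_⟩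
    rw [← Real.rpow_natCast (x ^ ((n:ℝ)⁻¹)) n, ← Real.rpow_mul hx.le,
      inv_mul_cancel₀ (by exact_mod_cast hn), Real.rpow_one]
  rcases hd with hd | hodd
  · exact key d hd
  · rcases lt_or_gt_of_ne hd0 with hneg | hpos
    · obtain ⟨l, hl⟩ := key (-d) (by linarith)
      exact ⟨-l, by rw [hodd.neg_pow, hl, neg_neg]⟩
    · exact key d hpos

lemma aux_lift {m n : ℕ} (hm : Odd m) (hn : 2 ≤ n) (x : PGL n ℝ) (hx : x ^ m = 1) :
    ∃ s : Matrix.SpecialLinearGroup (Fin n) ℝ, SLtoPGL n ℝ s = x := by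
  have hn0 : n ≠ 0 := by omega
  have hm0 : m ≠ 0 := by rintro rfl; simp [Nat.odd_iff] at hm
  obtain ⟨A, hA⟩ := QuotientGroup.mk'_surjective (Subgroup.center (GL (Fin n) ℝ)) x
  have hAm : A ^ m ∈ Subgroup.center (GL (Fin n) ℝ) := by
    rw [← QuotientGroup.eq_one_iff, ← QuotientGroup.mk'_apply, map_pow, hA, hx]
  obtain ⟨c, hc⟩ := aux_center_scalar (A ^ m) hAm
  have hcval : ((A ^ m : GL (Fin n) ℝ) : Matrix (Fin n) (Fin n) ℝ)
      = ((A : Matrix (Fin n) (Fin n) ℝ)) ^ m := Units.val_pow_eq_pow_val A m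
  have hdet : (det (A : Matrix (Fin n) (Fin n) ℝ)) ^ m = c ^ n := by
    rw [← det_pow, ← hcval, hc]
    simp [det_smul]
  have hAdet : det (A : Matrix (Fin n) (Fin n) ℝ) ≠ 0 := by
    have : IsUnit ((A : Matrix (Fin n) (Fin n) ℝ)) := ⟨A, rfl⟩
    exact ((Matrix.isUnit_iff_isUnit_det _).mp this).ne_zero
  have hc0 : c ≠ 0 := by
    intro h
    rw [h, zero_pow hn0] at hdet
    exact hAdet (pow_eq_zero_iff hm0 |>.mp hdet)
  have hd : 0 < (det (A : Matrix (Fin n) (Fin n) ℝ))⁻¹ ∨ Odd n := by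
    rcases Nat.even_or_odd n with he | ho
    · left
      rw [inv_pos]
      have : 0 < c ^ n := he.pow_pos hc0
      rw [← hdet] at this
      exact hm.pow_pos_iff.mp this
    · exact Or.inr ho
  obtain ⟨l, hl⟩ := aux_pow_exists hn0 _ (inv_ne_zero hAdet) hd
  have hl0 : l ≠ 0 := by
    intro h
    rw [h, zero_pow hn0] at hl
    exact inv_ne_zero hAdet hl.symm
  refine ⟨⟨l • (A : Matrix (Fin n) (Fin n) ℝ), by
    rw [det_smul]
    simp only [Fintype.card_fin]
    rw [hl, inv_mul_cancel₀ hAdet]⟩, ?_⟩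
  have hw : ∃ w : GL (Fin n) ℝ, (w : Matrix (Fin n) (Fin n) ℝ) = l • 1 := by
    refine ⟨⟨l • 1, l⁻¹ • 1, ?_, ?_⟩, rfl⟩ <;>
      simp [smul_smul, mul_inv_cancel₀ hl0, inv_mul_cancel₀ hl0]
  obtain ⟨w, hwval⟩ := hw
  have hwA : Matrix.SpecialLinearGroup.toGL
      (⟨l • (A : Matrix (Fin n) (Fin n) ℝ), by
        rw [det_smul]; simp only [Fintype.card_fin]; rw [hl, inv_mul_cancel₀ hAdet]⟩ :
        Matrix.SpecialLinearGroup (Fin n) ℝ) = w * A := by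
    ext1
    show l • (A : Matrix (Fin n) (Fin n) ℝ) = (w : Matrix (Fin n) (Fin n) ℝ) * A
    rw [hwval, Matrix.smul_mul, Matrix.one_mul]
  rw [SLtoPGL]
  change (QuotientGroup.mk' (Subgroup.center (GL (Fin n) ℝ))) (Matrix.SpecialLinearGroup.toGL _) = x
  rw [hwA, _root_.map_mul]
  have : (QuotientGroup.mk' (Subgroup.center (GL (Fin n) ℝ))) w = 1 :=
    (QuotientGroup.eq_one_iff w).mpr (aux_scalar_center w l hwval)
  rw [this, one_mul, hA]

/-- Every faithful projective representation `θ : G → PGL(n, ℝ)`, `n ≥ 2`, of a finite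
group `G` of odd order lifts to a faithful representation `θ' : G → SL(n, ℝ)`. -/
theorem odd_order_lifts_to_SL {G : Type*} [Group G] [Fintype G]
    (hodd : Odd (Fintype.card G)) {n : ℕ} (hn : 2 ≤ n)
    (θ : G →* PGL n ℝ) (hθ : Function.Injective θ) :
    ∃ θ' : G →* Matrix.SpecialLinearGroup (Fin n) ℝ,
      Function.Injective θ' ∧ (SLtoPGL n ℝ).comp θ' = θ := by
  classical
  have hn0 : n ≠ 0 := by omega
  -- the pullback subgroup
  let P : Subgroup (G × Matrix.SpecialLinearGroup (Fin n) ℝ) :=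
    { carrier := {p | θ p.1 = SLtoPGL n ℝ p.2}
      mul_mem' := by
        intro a b ha hb
        simp only [Set.mem_setOf_eq] at *
        rw [Prod.fst_mul, Prod.snd_mul, _root_.map_mul, _root_.map_mul, ha, hb]
      one_mem' := by simp
      inv_mem' := by
        intro a ha
        simp only [Set.mem_setOf_eq] at *
        rw [Prod.fst_inv, Prod.snd_inv, _root_.map_inv, _root_.map_inv, ha] }
  have memP : ∀ p : P, θ (p : G × Matrix.SpecialLinearGroup (Fin n) ℝ).1
      = SLtoPGL n ℝ (p : G × Matrix.SpecialLinearGroup (Fin n) ℝ).2 := fun p => p.2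
  let π : P →* G := (MonoidHom.fst G _).comp P.subtype
  have hπ : Function.Surjective π := by
    intro g
    obtain ⟨s, hs⟩ := aux_lift hodd hn (θ g)
      (by rw [← map_pow, pow_card_eq_one, _root_.map_one])
    exact ⟨⟨(g, s), hs.symm⟩, rfl⟩
  -- structure of the kernel
  have hker : ∀ x : P, x ∈ π.ker → x = 1 ∨
      ((x : G × Matrix.SpecialLinearGroup (Fin n) ℝ).1 = 1 ∧
        ((x : G × Matrix.SpecialLinearGroup (Fin n) ℝ).2 :
          Matrix (Fin n) (Fin n) ℝ) = (-1 : ℝ) • 1) := by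
    intro x hx
    have h1 : (x : G × Matrix.SpecialLinearGroup (Fin n) ℝ).1 = 1 := hx
    have h2 : SLtoPGL n ℝ (x : G × Matrix.SpecialLinearGroup (Fin n) ℝ).2 = 1 := by
      rw [← memP x, h1, _root_.map_one]
    set s := (x : G × Matrix.SpecialLinearGroup (Fin n) ℝ).2 with hs
    have hcen : Matrix.SpecialLinearGroup.toGL s ∈ Subgroup.center (GL (Fin n) ℝ) := by
      rw [SLtoPGL, MonoidHom.comp_apply] at h2
      exact (QuotientGroup.eq_one_iff _).mp h2
    obtain ⟨c, hc⟩ := aux_center_scalar _ hcen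
    have hsval : (s : Matrix (Fin n) (Fin n) ℝ) = c • 1 := hc
    have hdet1 : c ^ n = 1 := by
      have := s.2
      rw [hsval] at this
      simpa [det_smul] using this
    rcases (pow_eq_one_iff_of_ne_zero hn0).mp hdet1 with hc1 | hc1
    · left
      have hs1 : s = 1 := by
        ext1
        rw [hsval, hc1, one_smul]
        rfl
      ext1
      refine Prod.ext h1 ?_
      rw [← hs, hs1]
      rfl
    · right
      exact ⟨h1, by rw [hsval, hc1.1]⟩
  have hone : ¬ ((1 : Matrix (Fin n) (Fin n) ℝ) = (-1 : ℝ) • 1) := by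
    intro h
    have := congrFun (congrFun h ⟨0, by omega⟩) ⟨0, by omega⟩
    simp [Matrix.one_apply] at this
    exact absurd this (by norm_num)
  -- the kernel injects into Bool
  have hinjB : Function.Injective (fun x : π.ker => (decide ((x : P) = 1) : Bool)) := by
    intro a b hab
    rcases hker a a.2 with ha | ha <;> rcases hker b b.2 with hb | hb
    · exact Subtype.ext (ha.trans hb.symm)
    · exfalso
      rw [decide_eq_decide] at hab
      have hb1 : ((b : P) : P) = 1 := hab.mp ha
      rw [hb1] at hb
      have hmat : (1 : Matrix (Fin n) (Fin n) ℝ) = (-1 : ℝ) • 1 := by simpa using hb.2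
      exact hone hmat
    · exfalso
      rw [decide_eq_decide] at hab
      have ha1 : ((a : P) : P) = 1 := hab.mpr hb
      rw [ha1] at ha
      have hmat : (1 : Matrix (Fin n) (Fin n) ℝ) = (-1 : ℝ) • 1 := by simpa using ha.2
      exact hone hmat
    · refine Subtype.ext (Subtype.ext (Prod.ext (ha.1.trans hb.1.symm) ?_))
      exact Subtype.ext (ha.2.trans hb.2.symm)
  haveI hfin : Finite π.ker := Finite.of_injective _ hinjB
  haveI : Nonempty π.ker := ⟨1⟩
  have hne : Nat.card π.ker ≠ 0 := Nat.card_ne_zero.mpr ⟨⟨1⟩, hfin⟩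
  have hle2 : Nat.card π.ker ≤ 2 := by
    have h := Nat.card_le_card_of_injective _ hinjB
    rwa [Nat.card_eq_fintype_card (α := Bool), Fintype.card_bool] at h
  have hpos : 0 < Nat.card π.ker := Nat.pos_of_ne_zero hne
  have hcop : Nat.Coprime (Nat.card π.ker) (Fintype.card G) := by
    have h12 : Nat.card π.ker = 1 ∨ Nat.card π.ker = 2 := by omega
    rcases h12 with h | h
    · rw [h]; exact Nat.coprime_one_left _
    · rw [h]
      refine (Nat.prime_two.coprime_iff_not_dvd).mpr ?_
      intro hdvd
      obtain ⟨k, hk⟩ := hodd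
      omega
  have hidx : π.ker.index = Fintype.card G := by
    rw [Subgroup.index_ker, MonoidHom.range_eq_top.mpr hπ, Subgroup.card_top,
      Nat.card_eq_fintype_card]
  obtain ⟨H, hH⟩ := Subgroup.exists_right_complement'_of_coprime
    (N := π.ker) (by rw [hidx]; exact hcop)
  -- the restriction of π to H is bijective
  let φ : H →* G := π.comp H.subtype
  have hφinj : Function.Injective φ := by
    intro a b hab
    have hmem : (a : P) * (b : P)⁻¹ ∈ π.ker := by
      rw [MonoidHom.mem_ker, _root_.map_mul, _root_.map_inv]
      have : π (a : P) = π (b : P) := hab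
      rw [this, mul_inv_cancel]
    have hmemH : (a : P) * (b : P)⁻¹ ∈ H := mul_mem a.2 (inv_mem b.2)
    have : (a : P) * (b : P)⁻¹ = 1 :=
      Subgroup.disjoint_def.mp hH.disjoint hmem hmemH
    exact Subtype.ext (mul_inv_eq_one.mp this)
  have hφsurj : Function.Surjective φ := by
    intro g
    obtain ⟨p, hp⟩ := hπ g
    obtain ⟨⟨k, h⟩, hkh, -⟩ := hH.existsUnique p
    refine ⟨⟨h.1, h.2⟩, ?_⟩
    have hπk : π (k : P) = 1 := k.2
    have heq : π ((k : P) * (h : P)) = g := by rw [hkh]; exact hp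
    rw [_root_.map_mul, hπk, one_mul] at heq
    exact heq
  let e : H ≃* G := MulEquiv.ofBijective φ ⟨hφinj, hφsurj⟩
  let θ' : G →* Matrix.SpecialLinearGroup (Fin n) ℝ :=
    ((MonoidHom.snd G _).comp (P.subtype.comp H.subtype)).comp e.symm.toMonoidHom
  have hcomp : (SLtoPGL n ℝ).comp θ' = θ := by
    ext g
    have h1 : φ (e.symm g) = g := e.apply_symm_apply g
    have h2 : ((((e.symm g : H) : P)) :
        G × Matrix.SpecialLinearGroup (Fin n) ℝ).1 = g := h1
    have := memP ((e.symm g : H) : P)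
    rw [h2] at this
    exact this.symm
  refine ⟨θ', ?_, hcomp⟩
  intro a b hab
  apply hθ
  have : (SLtoPGL n ℝ).comp θ' a = (SLtoPGL n ℝ).comp θ' b := by
    simp only [MonoidHom.comp_apply, hab]
  rwa [hcomp] at this
end

section
/- Every finite subgroup of odd order of PGL(2, ℝ) is cyclic. -/
/-!
An element of odd order `k` of `PGL(2, ℝ)` lifts to `SL(2, ℝ)`: if `B` represents it, `B ^ k` is
scalar, so `det B ^ k > 0`, hence `det B > 0` and `B` can be rescaled to determinant one. So a
finite subgroup of odd order is the image of its preimage in `SL(2, ℝ)`, which is finite because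
`SL(2, ℝ) → PGL(2, ℝ)` has kernel `{±1}`. A finite subgroup of `SL(2, ℝ)` preserves the averaged inner product `∑ gᵀ g`, so it
is conjugate into `SO(2)`, which embeds into `ℂˣ`; finite subgroups of `ℂˣ` are cyclic.
-/

open Matrix

theorem Subgroup.finite_comap {G G' : Type*} [Group G] [Group G'] (f : G →* G') [Finite f.ker]
    (H : Subgroup G') [Finite H] : Finite (H.comap f) := by
  refine (f.domRestrict (H.comap f)).finite_iff_finite_ker_range.2 ⟨?_, ?_⟩
  · rw [MonoidHom.ker_domRestrict]
    exact Finite.of_injective (fun x => (⟨x.1.1, x.2⟩ : f.ker)) fun x y h =>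
      Subtype.ext (Subtype.ext congr(($h).1))
  · rw [MonoidHom.domRestrict_range]
    exact Finite.of_injective _ (Subgroup.inclusion_injective (Subgroup.map_comap_le f H))

namespace Matrix

section Unitarization

open scoped MatrixOrder ComplexOrder

variable {𝕜 n G : Type*} [RCLike 𝕜] [Fintype n] [DecidableEq n] [Group G]

def averagedGram [Fintype G] (ρ : G →* GL n 𝕜) : Matrix n n 𝕜 :=
  ∑ g, (ρ g : Matrix n n 𝕜)ᴴ * ρ g

theorem posDef_averagedGram [Fintype G] (ρ : G →* GL n 𝕜) : (averagedGram ρ).PosDef :=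
  posDef_sum Finset.univ_nonempty fun g _ =>
    PosDef.conjTranspose_mul_self _ (mulVec_injective_iff_isUnit.2 (ρ g).isUnit)

theorem conjTranspose_mul_averagedGram_mul [Fintype G] (ρ : G →* GL n 𝕜) (h : G) :
    (ρ h : Matrix n n 𝕜)ᴴ * averagedGram ρ * ρ h = averagedGram ρ := by
  simp only [averagedGram, Finset.mul_sum, Finset.sum_mul]
  refine Fintype.sum_equiv (Equiv.mulRight h) _ _ fun g => ?_
  simp [conjTranspose_mul, Matrix.mul_assoc]

theorem exists_conj_mem_unitaryGroup [Finite G] (ρ : G →* GL n 𝕜) :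
    ∃ P : GL n 𝕜, ∀ g, (MulAut.conj P (ρ g) : Matrix n n 𝕜) ∈ unitaryGroup n 𝕜 := by
  cases nonempty_fintype G
  obtain ⟨P, hP, hS⟩ := (CStarAlgebra.isStrictlyPositive_iff_eq_star_mul_self
    (A := Matrix n n 𝕜)).mp (posDef_averagedGram ρ).isStrictlyPositive
  refine ⟨hP.unit, fun g => mem_unitaryGroup_iff'.2 ?_⟩
  set U := hP.unit
  have hU : star (U : Matrix n n 𝕜) * U = averagedGram ρ := hS.symm
  calc star ((U * ρ g * U⁻¹ : GL n 𝕜) : Matrix n n 𝕜) * (U * ρ g * U⁻¹ : GL n 𝕜)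
      = star ((U⁻¹ : GL n 𝕜) : Matrix n n 𝕜) *
          ((ρ g : Matrix n n 𝕜)ᴴ * averagedGram ρ * ρ g) * (U⁻¹ : GL n 𝕜) := by
        simp only [Units.val_mul, star_mul, ← hU, star_eq_conjTranspose, Matrix.mul_assoc]
    _ = star ((U : Matrix n n 𝕜) * (U⁻¹ : GL n 𝕜)) * ((U : Matrix n n 𝕜) * (U⁻¹ : GL n 𝕜)) := by
        rw [conjTranspose_mul_averagedGram_mul, ← hU, star_mul]
        simp only [Matrix.mul_assoc]
    _ = 1 := by simp

end Unitarization

/-- The rotation `!![a, -b; b, a]` is sent to `a + b * I`. -/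
def specialOrthogonalGroupToComplex : specialOrthogonalGroup (Fin 2) ℝ →* ℂ where
  toFun A := ⟨(A : Matrix (Fin 2) (Fin 2) ℝ) 0 0, (A : Matrix (Fin 2) (Fin 2) ℝ) 1 0⟩
  map_one' := by apply Complex.ext <;> simp
  map_mul' A B := by
    obtain ⟨hA₁₁, hA₀₁, -⟩ := mem_specialOrthogonalGroup_fin_two_iff.1 A.2
    apply Complex.ext <;> simp [mul_apply, Fin.sum_univ_two, hA₀₁, ← hA₁₁] <;> ring

theorem specialOrthogonalGroupToComplex_injective :
    Function.Injective specialOrthogonalGroupToComplex := by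
  refine (injective_iff_map_eq_one _).2 fun A hA => ?_
  obtain ⟨h₁₁, h₀₁, -⟩ := mem_specialOrthogonalGroup_fin_two_iff.1 A.2
  have h₀₀ : (A : Matrix (Fin 2) (Fin 2) ℝ) 0 0 = 1 := congr_arg Complex.re hA
  have h₁₀ : (A : Matrix (Fin 2) (Fin 2) ℝ) 1 0 = 0 := congr_arg Complex.im hA
  ext i j
  fin_cases i <;> fin_cases j <;> simp [h₀₀, h₁₀, h₀₁, ← h₁₁]

namespace SpecialLinearGroup

instance {n R : Type*} [Fintype n] [DecidableEq n] [CommRing R] [IsDomain R] :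
    Finite (Subgroup.center (SpecialLinearGroup n R)) :=
  have : NeZero (max (Fintype.card n) 1) := NeZero.of_pos (lt_max_of_lt_right one_pos)
  Finite.of_equiv _ center_equiv_rootsOfUnity.symm.toEquiv

theorem isCyclic_of_finite (H : Subgroup (SpecialLinearGroup (Fin 2) ℝ)) [Finite H] :
    IsCyclic H := by
  let ρ : H →* GL (Fin 2) ℝ := toGL.comp H.subtype
  obtain ⟨P, hP⟩ := exists_conj_mem_unitaryGroup ρ
  let f : H →* specialOrthogonalGroup (Fin 2) ℝ :=
    ((Units.coeHom _).comp ((MulAut.conj P).toMonoidHom.comp ρ)).codRestrict _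
      fun g => ⟨hP g, by simp [ρ, P.det_ne_zero]⟩
  have hf : Function.Injective f := fun g h hgh =>
    Subtype.ext <| toGL_injective <| (MulAut.conj P).injective <| Units.ext congr(($hgh).1)
  exact isCyclic_of_injective_ringHom (specialOrthogonalGroupToComplex.comp f)
    (specialOrthogonalGroupToComplex_injective.comp hf)

end SpecialLinearGroup

namespace ProjGenLinGroup

variable {n : Type*} [Fintype n] [DecidableEq n]

theorem mk_mem_range_toPGL_of_det_pos [Nonempty n] {B : GL n ℝ}
    (hB : 0 < (B : Matrix n n ℝ).det) : mk B ∈ SpecialLinearGroup.toPGL.range := by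
  set t := (B : Matrix n n ℝ).det ^ ((Fintype.card n : ℝ)⁻¹)
  have ht : t ^ Fintype.card n = (B : Matrix n n ℝ).det :=
    Real.rpow_inv_natCast_pow hB.le Fintype.card_ne_zero
  have ht0 : t ≠ 0 := (Real.rpow_pos_of_pos hB _).ne'
  refine ⟨⟨t⁻¹ • (B : Matrix n n ℝ), by rw [det_smul, inv_pow, ht, inv_mul_cancel₀ hB.ne']⟩, ?_⟩
  refine mk_eq_mk_iff.2 ⟨Units.mk0 t ht0, Units.ext ?_⟩
  change t⁻¹ • (B : Matrix n n ℝ) * scalar n t = B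
  rw [scalar_apply, ← smul_one_eq_diagonal, Matrix.smul_mul, Matrix.mul_smul, Matrix.mul_one,
    smul_smul, inv_mul_cancel₀ ht0, one_smul]

theorem det_pos_of_mk_pow_eq_one (hn : Even (Fintype.card n)) {k : ℕ} (hk : Odd k) {B : GL n ℝ}
    (hB : mk B ^ k = 1) : 0 < (B : Matrix n n ℝ).det := by
  rw [← map_pow, mk_eq_one, GeneralLinearGroup.center_eq_range_scalar] at hB
  obtain ⟨u, hu⟩ := hB
  have : (B : Matrix n n ℝ).det ^ k = (u : ℝ) ^ Fintype.card n := by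
    rw [← det_pow, ← Units.val_pow_eq_pow_val, ← hu]
    simp
  exact hk.pow_pos_iff.1 (this ▸ hn.pow_pos u.ne_zero)

theorem mem_range_toPGL_of_pow_eq_one [Nonempty n] (hn : Even (Fintype.card n)) {k : ℕ}
    (hk : Odd k) {h : ProjGenLinGroup n ℝ} (hh : h ^ k = 1) :
    h ∈ SpecialLinearGroup.toPGL.range := by
  induction h using induction_on with
  | mk B => exact mk_mem_range_toPGL_of_det_pos (det_pos_of_mk_pow_eq_one hn hk hh)

end ProjGenLinGroup

end Matrix

/-- Every finite subgroup of odd order of `PGL(2, ℝ)` is cyclic. -/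
theorem odd_subgroup_PGL2_isCyclic (H : Subgroup (PGL 2 ℝ)) [Finite H]
    (hodd : Odd (Nat.card H)) : IsCyclic H := by
  -- `toPGL` lands in Mathlib's `ProjGenLinGroup`, a non-reducible copy of `PGL 2 ℝ`; retyping it
  -- lets instances on `H` be found.
  let φ : SpecialLinearGroup (Fin 2) ℝ →* PGL 2 ℝ := SpecialLinearGroup.toPGL
  have hH : H ≤ φ.range := fun h hh =>
    ProjGenLinGroup.mem_range_toPGL_of_pow_eq_one (n := Fin 2) even_two hodd
      congr(($(pow_card_eq_one' (x := (⟨h, hh⟩ : H)))).1)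
  have : Finite φ.ker := SpecialLinearGroup.toPGL_ker (n := Fin 2) (R := ℝ) ▸ inferInstance
  have : Finite (H.comap φ) := Subgroup.finite_comap φ H
  have : IsCyclic (H.comap φ) := SpecialLinearGroup.isCyclic_of_finite _
  rw [← Subgroup.map_comap_eq_self hH]
  exact isCyclic_of_surjective _ (φ.subgroupMap_surjective _)
end
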